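/- A resource theory has a single complete resource monotone if and only if it is totally ordered. That is: there exists a resource monotone R such that for all density matrices ρ, σ one has ρ → σ if and only if R(ρ) ≥ R(σ), exactly when for every pair of density matrices ρ, σ at least one of the conversions ρ → σ or σ → ρ is possible by free operations. -/

import Mathlib

open scoped Matrix Kronecker ComplexOrder

noncomputable section

/-- A density matrix: positive semidefinite with unit trace. -/
def IsDensityMatrix {ι : Type*} [Fintype ι] (ρ : Matrix ι ι ℂ) : Prop :=
  ρ.PosSemidef ∧ ρ.trace = 1

/-- The square root of a positive semidefinite matrix (Mathlib's former `Matrix.PosSemidef.sqrt`). -/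
noncomputable def Matrix.PosSemidef.sqrt {n 𝕜 : Type*} [Fintype n] [DecidableEq n] [RCLike 𝕜]
    {A : Matrix n n 𝕜} (hA : A.PosSemidef) : Matrix n n 𝕜 :=
  hA.1.eigenvectorUnitary.1 * Matrix.diagonal ((↑) ∘ (√·) ∘ hA.1.eigenvalues) *
    (star hA.1.eigenvectorUnitary : Matrix n n 𝕜)

/-- The trace norm `‖M‖₁ = Tr √(M† M)`. -/
noncomputable def traceNorm {ι : Type*} [Fintype ι] [DecidableEq ι]
    (M : Matrix ι ι ℂ) : ℝ :=
  ((Matrix.posSemidef_conjTranspose_mul_self M).sqrt.trace).re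

/-- The amplification `Λ ⊗ id_k` of a linear map on matrices. -/
def amplify {ι : Type*} [Fintype ι] [DecidableEq ι]
    (Λ : Matrix ι ι ℂ →ₗ[ℂ] Matrix ι ι ℂ) (k : ℕ)
    (M : Matrix (ι × Fin k) (ι × Fin k) ℂ) : Matrix (ι × Fin k) (ι × Fin k) ℂ :=
  Matrix.of fun p q => Λ (Matrix.of fun i j => M (i, p.2) (j, q.2)) p.1 q.1

/-- A linear map on matrices is CPTP (a quantum channel) if all its amplifications
preserve positive semidefiniteness and it preserves the trace. -/
def IsCPTP {ι : Type*} [Fintype ι] [DecidableEq ι]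
    (Λ : Matrix ι ι ℂ →ₗ[ℂ] Matrix ι ι ℂ) : Prop :=
  (∀ (k : ℕ) (M : Matrix (ι × Fin k) (ι × Fin k) ℂ),
      M.PosSemidef → (amplify Λ k M).PosSemidef) ∧
  (∀ M, (Λ M).trace = M.trace)

/-- A quantum channel on a `d`-dimensional system. -/
structure QChannel (d : ℕ) where
  toFun : Matrix (Fin d) (Fin d) ℂ →ₗ[ℂ] Matrix (Fin d) (Fin d) ℂ
  cptp : IsCPTP toFun

/-- A resource theory: a convex compact set `F` of free states and a set `O` of free
operations containing the identity, closed under composition, preserving `F`, and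
containing the state-preparation channel `ρ ↦ Tr(ρ)σ` for every free `σ`. -/
structure ResourceTheory (d : ℕ) where
  F : Set (Matrix (Fin d) (Fin d) ℂ)
  O : Set (QChannel d)
  F_density : ∀ σ ∈ F, IsDensityMatrix σ
  F_convex : Convex ℝ F
  F_compact : IsCompact F
  id_mem : ∃ Λ ∈ O, ∀ ρ, Λ.toFun ρ = ρ
  comp_mem : ∀ Λ₁ ∈ O, ∀ Λ₂ ∈ O, ∃ Λ ∈ O, ∀ ρ, Λ.toFun ρ = Λ₂.toFun (Λ₁.toFun ρ)
  free_mapsto : ∀ Λ ∈ O, ∀ σ ∈ F, Λ.toFun σ ∈ F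
  prep_mem : ∀ σ ∈ F, ∃ Λ ∈ O, ∀ ρ : Matrix (Fin d) (Fin d) ℂ, Λ.toFun ρ = ρ.trace • σ

/-- `ρ → σ`: for every `ε > 0` some free operation maps `ρ` within trace-distance `ε` of `σ`. -/
def Converts {d : ℕ} (RT : ResourceTheory d) (ρ σ : Matrix (Fin d) (Fin d) ℂ) : Prop :=
  ∀ ε > 0, ∃ Λ ∈ RT.O, traceNorm (Λ.toFun ρ - σ) < ε

/-- A resource monotone: nonnegative on states, nonincreasing under free operations,
vanishing on free states. -/
def IsMonotone {d : ℕ} (RT : ResourceTheory d) (R : Matrix (Fin d) (Fin d) ℂ → ℝ) : Prop :=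
  (∀ ρ, IsDensityMatrix ρ → 0 ≤ R ρ) ∧
  (∀ ρ, IsDensityMatrix ρ → ∀ Λ ∈ RT.O, R (Λ.toFun ρ) ≤ R ρ) ∧
  (∀ σ ∈ RT.F, R σ = 0)

/-- The pure state `|ψ⟩⟨ψ|`. -/
def pureState {ι : Type*} (ψ : ι → ℂ) : Matrix ι ι ℂ :=
  Matrix.vecMulVec ψ (star ψ)

/-- `ψ` is a unit vector. -/
def IsUnitVec {ι : Type*} [Fintype ι] (ψ : ι → ℂ) : Prop :=
  ∑ i, Complex.normSq (ψ i) = 1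

/-- Trace-norm distance from `ρ` to a set of states. -/
noncomputable def distToSet {ι : Type*} [Fintype ι] [DecidableEq ι]
    (F : Set (Matrix ι ι ℂ)) (ρ : Matrix ι ι ℂ) : ℝ :=
  sInf ((fun μ => traceNorm (ρ - μ)) '' F)

/-!
One direction is immediate: a complete monotone compares any two states. Conversely,
convertibility preorders the states (free operations compose, and channels contract the trace
norm), totally by assumption, and the states convertible to a given `σ` form a closed set since
the trace norm is continuous. Debreu's construction then yields a utility: with a countable
basis `(B_n)` of the state space, `u σ = ∑ 2⁻ⁿ` over those `B_n` containing no state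
convertible to `σ`. It is monotone, and strictly monotone because a state not convertible to
`σ` has a basic neighbourhood of such states. Every state converts to every free state, so
shifting `u` by its infimum makes it vanish on free states.
-/

open scoped MatrixOrder

section TraceNorm

variable {n : Type*} [Fintype n] [DecidableEq n] {A B P Q : Matrix n n ℂ}

lemma Matrix.PosSemidef.sqrt_eq_cfcSqrt (hA : A.PosSemidef) : hA.sqrt = CFC.sqrt A := by
  rw [CFC.sqrt_eq_real_sqrt A hA.nonneg, cfcₙ_eq_cfc, hA.1.cfc_eq, Matrix.PosSemidef.sqrt,
    Matrix.IsHermitian.cfc, Unitary.conjStarAlgAut_apply]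

lemma traceNorm_eq_re_trace_abs (M : Matrix n n ℂ) : traceNorm M = (CFC.abs M).trace.re := by
  rw [traceNorm, Matrix.PosSemidef.sqrt_eq_cfcSqrt, CFC.abs, Matrix.star_eq_conjTranspose]

lemma traceNorm_zero : traceNorm (0 : Matrix n n ℂ) = 0 := by
  simp [traceNorm_eq_re_trace_abs]

lemma continuous_traceNorm : Continuous (traceNorm : Matrix n n ℂ → ℝ) := by
  have habs : Continuous (CFC.abs : Matrix n n ℂ → Matrix n n ℂ) := by
    open scoped Matrix.Norms.L2Operator in exact CFC.continuous_abs
  simp_rw [funext traceNorm_eq_re_trace_abs]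
  exact Complex.continuous_re.comp habs.matrix_trace

lemma Matrix.PosSemidef.re_trace_mul_nonneg (hP : P.PosSemidef) (hQ : Q.PosSemidef) :
    0 ≤ (P * Q).trace.re := by
  have hsqrt : (CFC.sqrt P)ᴴ = CFC.sqrt P :=
    (Matrix.nonneg_iff_posSemidef.mp (CFC.sqrt_nonneg P)).1
  have htr := (hQ.mul_mul_conjTranspose_same (CFC.sqrt P)).trace_nonneg
  rw [hsqrt, Matrix.trace_mul_cycle, CFC.sqrt_mul_sqrt_self P hP.nonneg] at htr
  exact (Complex.nonneg_iff.mp htr).1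

lemma Matrix.continuousOn_spectrum (f : ℝ → ℝ) (A : Matrix n n ℂ) :
    ContinuousOn f (spectrum ℝ A) :=
  (Set.toFinite _).continuousOn f

lemma traceNorm_sub_le_of_posSemidef (hP : P.PosSemidef) (hQ : Q.PosSemidef) :
    traceNorm (P - Q) ≤ P.trace.re + Q.trace.re := by
  set A := P - Q
  have hA : IsSelfAdjoint A := hP.1.sub hQ.1
  -- `S` is the sign of `P - Q`: `|P - Q| = S (P - Q)` and `-1 ≤ S ≤ 1`.
  set S := cfc (fun x : ℝ => (SignType.sign x : ℝ)) A
  have habs : CFC.abs A = S * A := by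
    nth_rewrite 2 [← cfc_id' ℝ A]
    rw [CFC.abs_eq_cfc_norm A, ← cfc_mul _ _ A (A.continuousOn_spectrum _)]
    simp only [Real.norm_eq_abs, sign_mul_self]
  have hS_le : S ≤ 1 := cfc_le_one _ A fun x _ => by
    rcases lt_trichotomy x 0 with hx | rfl | hx <;> simp [*]
  have hS_ge : algebraMap ℝ _ (-1) ≤ S := algebraMap_le_cfc _ _ A (fun x _ => by
    rcases lt_trichotomy x 0 with hx | rfl | hx <;> simp [*]) (A.continuousOn_spectrum _)
  have hP' := (Matrix.le_iff.mp hS_le).re_trace_mul_nonneg hP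
  have hQ' := (Matrix.le_iff.mp hS_ge).re_trace_mul_nonneg hQ
  rw [traceNorm_eq_re_trace_abs, habs]
  simp only [A, Matrix.mul_sub, Matrix.sub_mul, Matrix.add_mul, Matrix.one_mul, Matrix.trace_sub,
    Matrix.trace_add, map_neg, map_one, sub_neg_eq_add, Complex.sub_re, Complex.add_re] at *
  linarith

lemma Matrix.IsHermitian.traceNorm_eq (hA : A.IsHermitian) :
    traceNorm A = (A⁺).trace.re + (A⁻).trace.re := by
  rw [traceNorm_eq_re_trace_abs, ← CFC.posPart_add_negPart A hA, Matrix.trace_add, Complex.add_re]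

lemma Matrix.posSemidef_posPart (A : Matrix n n ℂ) : (A⁺).PosSemidef :=
  Matrix.nonneg_iff_posSemidef.mp (CFC.posPart_nonneg A)

lemma Matrix.posSemidef_negPart (A : Matrix n n ℂ) : (A⁻).PosSemidef :=
  Matrix.nonneg_iff_posSemidef.mp (CFC.negPart_nonneg A)

lemma traceNorm_add_le (hA : A.IsHermitian) (hB : B.IsHermitian) :
    traceNorm (A + B) ≤ traceNorm A + traceNorm B := by
  have hAB : A + B = (A⁺ + B⁺) - (A⁻ + B⁻) := by
    nth_rewrite 1 [← CFC.posPart_sub_negPart A hA, ← CFC.posPart_sub_negPart B hB]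
    abel
  have h := traceNorm_sub_le_of_posSemidef (A.posSemidef_posPart.add B.posSemidef_posPart)
    (A.posSemidef_negPart.add B.posSemidef_negPart)
  rw [← hAB, Matrix.trace_add, Matrix.trace_add, Complex.add_re, Complex.add_re] at h
  rw [hA.traceNorm_eq, hB.traceNorm_eq]
  linarith

variable {Φ : Matrix n n ℂ →ₗ[ℂ] Matrix n n ℂ}

lemma map_eq_map_posPart_sub_map_negPart (hA : A.IsHermitian) : Φ A = Φ A⁺ - Φ A⁻ := by
  rw [← map_sub, CFC.posPart_sub_negPart A hA]

lemma Matrix.IsHermitian.map_of_posSemidef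
    (hΦ : ∀ M : Matrix n n ℂ, M.PosSemidef → (Φ M).PosSemidef) (hA : A.IsHermitian) :
    (Φ A).IsHermitian := by
  rw [map_eq_map_posPart_sub_map_negPart hA]
  exact (hΦ _ A.posSemidef_posPart).1.sub (hΦ _ A.posSemidef_negPart).1

lemma traceNorm_map_le (hΦ : ∀ M : Matrix n n ℂ, M.PosSemidef → (Φ M).PosSemidef)
    (htr : ∀ M, (Φ M).trace = M.trace) (hA : A.IsHermitian) :
    traceNorm (Φ A) ≤ traceNorm A := by
  rw [map_eq_map_posPart_sub_map_negPart hA, hA.traceNorm_eq, ← htr A⁺, ← htr A⁻]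
  exact traceNorm_sub_le_of_posSemidef (hΦ _ A.posSemidef_posPart) (hΦ _ A.posSemidef_negPart)

end TraceNorm

namespace QChannel

variable {d : ℕ} (Λ : QChannel d) {ρ σ τ : Matrix (Fin d) (Fin d) ℂ}

lemma map_posSemidef (hρ : ρ.PosSemidef) : (Λ.toFun ρ).PosSemidef := by
  have hamp := Λ.cptp.1 1 _ (hρ.submatrix (Prod.fst : Fin d × Fin 1 → Fin d))
  have hΛρ : Λ.toFun ρ = (amplify Λ.toFun 1 (ρ.submatrix Prod.fst Prod.fst)).submatrix
      (fun i => (i, 0)) (fun i => (i, 0)) := by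
    ext i j
    simp only [Matrix.submatrix_apply, amplify, Matrix.of_apply]
    congr 1
  rw [hΛρ]
  exact hamp.submatrix _

lemma map_isDensityMatrix (hρ : IsDensityMatrix ρ) : IsDensityMatrix (Λ.toFun ρ) :=
  ⟨Λ.map_posSemidef hρ.1, by rw [Λ.cptp.2, hρ.2]⟩

lemma map_isHermitian (hρ : ρ.IsHermitian) : (Λ.toFun ρ).IsHermitian :=
  hρ.map_of_posSemidef fun _ => Λ.map_posSemidef

lemma traceNorm_map_sub_le (hρ : ρ.IsHermitian) (hσ : σ.IsHermitian) (hτ : τ.IsHermitian) :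
    traceNorm (Λ.toFun ρ - τ) ≤ traceNorm (ρ - σ) + traceNorm (Λ.toFun σ - τ) :=
  calc traceNorm (Λ.toFun ρ - τ) = traceNorm (Λ.toFun (ρ - σ) + (Λ.toFun σ - τ)) := by
        rw [map_sub, sub_add_sub_cancel]
    _ ≤ traceNorm (Λ.toFun (ρ - σ)) + traceNorm (Λ.toFun σ - τ) :=
        traceNorm_add_le (Λ.map_isHermitian (hρ.sub hσ)) ((Λ.map_isHermitian hσ).sub hτ)
    _ ≤ traceNorm (ρ - σ) + traceNorm (Λ.toFun σ - τ) := by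
        gcongr
        exact traceNorm_map_le (fun _ => Λ.map_posSemidef) Λ.cptp.2 (hρ.sub hσ)

end QChannel

section Convertibility

variable {d : ℕ} {RT : ResourceTheory d} {ρ σ τ : Matrix (Fin d) (Fin d) ℂ}

lemma converts_map {Λ : QChannel d} (hΛ : Λ ∈ RT.O) (ρ : Matrix (Fin d) (Fin d) ℂ) :
    Converts RT ρ (Λ.toFun ρ) :=
  fun _ hε => ⟨Λ, hΛ, by rwa [sub_self, traceNorm_zero]⟩

lemma Converts.refl (RT : ResourceTheory d) (ρ : Matrix (Fin d) (Fin d) ℂ) :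
    Converts RT ρ ρ := by
  obtain ⟨Λ, hΛ, hid⟩ := RT.id_mem
  simpa only [hid] using converts_map hΛ ρ

lemma converts_of_mem_F (hσ : σ ∈ RT.F) (hρ : ρ.trace = 1) : Converts RT ρ σ := by
  obtain ⟨Λ, hΛ, hprep⟩ := RT.prep_mem σ hσ
  simpa only [hprep, hρ, one_smul] using converts_map hΛ ρ

lemma Converts.trans (hρ : ρ.IsHermitian) (hσ : σ.IsHermitian) (hτ : τ.IsHermitian)
    (h₁ : Converts RT ρ σ) (h₂ : Converts RT σ τ) : Converts RT ρ τ := by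
  intro ε hε
  obtain ⟨Λ₁, hΛ₁, hnear₁⟩ := h₁ (ε / 2) (half_pos hε)
  obtain ⟨Λ₂, hΛ₂, hnear₂⟩ := h₂ (ε / 2) (half_pos hε)
  obtain ⟨Λ, hΛ, hcomp⟩ := RT.comp_mem Λ₁ hΛ₁ Λ₂ hΛ₂
  refine ⟨Λ, hΛ, ?_⟩
  rw [hcomp]
  linarith [Λ₂.traceNorm_map_sub_le (Λ₁.map_isHermitian hρ) hσ hτ]

end Convertibility

theorem exists_monotone_strictMono_nonneg_of_isClosed_Ici {X : Type*} [TopologicalSpace X]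
    [SecondCountableTopology X] [Preorder X] (hclosed : ∀ x : X, IsClosed (Set.Ici x)) :
    ∃ u : X → ℝ, Monotone u ∧ StrictMono u ∧ ∀ x, 0 ≤ u x := by
  let B := TopologicalSpace.countableBasis X
  have : Encodable B := (TopologicalSpace.countable_countableBasis X).toEncodable
  let w : B → ℝ := fun s => (1 / 2) ^ Encodable.encode s
  have hw : 0 ≤ w := fun _ => by positivity
  let g : X → B → ℝ := fun x => {s : B | (s : Set X) ⊆ (Set.Ici x)ᶜ}.indicator w
  have hg : ∀ x, Summable (g x) := fun x => summable_geometric_two_encode.indicator _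
  have hg_mono : ∀ {x y : X}, x ≤ y → g x ≤ g y := fun hxy =>
    Set.indicator_le_indicator_of_subset
      (fun s hs => hs.trans (Set.compl_subset_compl.mpr (Set.Ici_subset_Ici.mpr hxy))) hw
  refine ⟨fun x => ∑' s, g x s,
    fun x y hxy => Summable.tsum_le_tsum (hg_mono hxy) (hg x) (hg y), fun x y hxy => ?_,
    fun x => tsum_nonneg fun s => Set.indicator_nonneg (fun s _ => hw s) s⟩
  obtain ⟨v, hvB, hxv, hv⟩ :=
    (TopologicalSpace.isBasis_countableBasis X).exists_subset_of_mem_open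
      (show x ∈ (Set.Ici y)ᶜ from hxy.not_ge) (hclosed y).isOpen_compl
  refine Summable.tsum_lt_tsum (hg_mono hxy.le) (i := ⟨v, hvB⟩) ?_ (hg x) (hg y)
  have hgx : g x ⟨v, hvB⟩ = 0 :=
    Set.indicator_of_notMem (fun hsub : (v : Set X) ⊆ (Set.Ici x)ᶜ => hsub hxv le_rfl) w
  rw [hgx, show g y ⟨v, hvB⟩ = w ⟨v, hvB⟩ from Set.indicator_of_mem hv w]
  positivity

instance Matrix.secondCountableTopology {m n R : Type*} [Countable m] [Countable n]
    [TopologicalSpace R] [SecondCountableTopology R] : SecondCountableTopology (Matrix m n R) :=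
  inferInstanceAs (SecondCountableTopology (m → n → R))

namespace ResourceTheory

variable {d : ℕ} (RT : ResourceTheory d)

/-- The states of `RT`, preordered by convertibility: `ρ ≤ σ` when `σ → ρ`. -/
def State (_ : ResourceTheory d) : Type := {ρ : Matrix (Fin d) (Fin d) ℂ | IsDensityMatrix ρ}

instance : TopologicalSpace RT.State := instTopologicalSpaceSubtype

instance : SecondCountableTopology RT.State :=
  inferInstanceAs (SecondCountableTopology {ρ : Matrix (Fin d) (Fin d) ℂ | IsDensityMatrix ρ})

instance : Preorder RT.State where
  le ρ σ := Converts RT σ.1 ρ.1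
  le_refl ρ := Converts.refl RT ρ.1
  le_trans ρ σ τ h₁ h₂ := h₂.trans τ.2.1.1 σ.2.1.1 ρ.2.1.1 h₁

lemma isClosed_Ici_state (σ : RT.State) : IsClosed (Set.Ici σ) := by
  refine isClosed_of_closure_subset fun ρ hρ ε hε => ?_
  have hnear : {ρ' : RT.State | traceNorm (ρ.1 - ρ'.1) < ε / 2} ∈ nhds ρ :=
    (isOpen_lt (continuous_traceNorm.comp (continuous_const.sub continuous_subtype_val))
      continuous_const).mem_nhds (by
        show traceNorm (ρ.1 - ρ.1) < ε / 2
        rw [sub_self, traceNorm_zero]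
        exact half_pos hε)
  obtain ⟨ρ', hρρ', hρ'σ⟩ := mem_closure_iff_nhds.mp hρ _ hnear
  obtain ⟨Λ, hΛ, hΛρ'⟩ := hρ'σ (ε / 2) (half_pos hε)
  refine ⟨Λ, hΛ, ?_⟩
  linarith [Λ.traceNorm_map_sub_le ρ.2.1.1 ρ'.2.1.1 σ.2.1.1, hρρ'.out]

variable {RT}

open scoped Classical in
/-- Free states are least for convertibility, so the shift by the infimum gives them value `0`. -/
def shiftedExtension (u : RT.State → ℝ) (ρ : Matrix (Fin d) (Fin d) ℂ) : ℝ :=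
  if h : IsDensityMatrix ρ then u ⟨ρ, h⟩ - ⨅ σ, u σ else 0

variable {u : RT.State → ℝ} {ρ : Matrix (Fin d) (Fin d) ℂ}

lemma shiftedExtension_of_isDensityMatrix (hρ : IsDensityMatrix ρ) :
    shiftedExtension u ρ = u ⟨ρ, hρ⟩ - ⨅ σ, u σ :=
  dif_pos hρ

lemma isMonotone_shiftedExtension (hu : Monotone u) (hu₀ : ∀ ρ, 0 ≤ u ρ) :
    IsMonotone RT (shiftedExtension u) := by
  have hbdd : BddBelow (Set.range u) := ⟨0, Set.forall_mem_range.mpr hu₀⟩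
  refine ⟨fun ρ hρ => ?_, fun ρ hρ Λ hΛ => ?_, fun σ hσ => ?_⟩
  · rw [shiftedExtension_of_isDensityMatrix hρ, sub_nonneg]
    exact ciInf_le hbdd _
  · rw [shiftedExtension_of_isDensityMatrix hρ,
      shiftedExtension_of_isDensityMatrix (Λ.map_isDensityMatrix hρ), sub_le_sub_iff_right]
    exact hu (converts_map hΛ ρ)
  · have hσ' := RT.F_density σ hσ
    have : Nonempty RT.State := ⟨⟨σ, hσ'⟩⟩
    rw [shiftedExtension_of_isDensityMatrix hσ', sub_eq_zero]
    exact le_antisymm (le_ciInf fun ρ => hu (converts_of_mem_F hσ ρ.2.2)) (ciInf_le hbdd _)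

lemma le_iff_shiftedExtension_le (hu : Monotone u) (hu' : StrictMono u)
    (htotal : ∀ ρ σ : RT.State, ρ ≤ σ ∨ σ ≤ ρ) (ρ σ : RT.State) :
    σ ≤ ρ ↔ shiftedExtension u σ.1 ≤ shiftedExtension u ρ.1 := by
  rw [shiftedExtension_of_isDensityMatrix ρ.2, shiftedExtension_of_isDensityMatrix σ.2,
    sub_le_sub_iff_right]
  refine ⟨fun h => hu h, fun h => ?_⟩
  by_contra hσρ
  exact (hu' (lt_of_le_not_ge ((htotal ρ σ).resolve_right hσρ) hσρ)).not_ge h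

end ResourceTheory

/-- A resource theory has a single complete resource monotone if and
only if it is totally ordered: there is a monotone `R` with `ρ → σ ↔ R(ρ) ≥ R(σ)`
exactly when every pair of states is convertible in at least one direction. -/
theorem single_complete_monotone_iff_totally_ordered {d : ℕ} (RT : ResourceTheory d) :
    (∃ R : Matrix (Fin d) (Fin d) ℂ → ℝ, IsMonotone RT R ∧
      ∀ ρ σ : Matrix (Fin d) (Fin d) ℂ, IsDensityMatrix ρ → IsDensityMatrix σ →
        (Converts RT ρ σ ↔ R σ ≤ R ρ)) ↔
    (∀ ρ σ : Matrix (Fin d) (Fin d) ℂ, IsDensityMatrix ρ → IsDensityMatrix σ →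
      Converts RT ρ σ ∨ Converts RT σ ρ) := by
  constructor
  · rintro ⟨R, -, hR⟩ ρ σ hρ hσ
    exact (le_total (R σ) (R ρ)).imp (hR ρ σ hρ hσ).2 (hR σ ρ hσ hρ).2
  · intro htotal
    obtain ⟨u, hu, hu', hu₀⟩ :=
      exists_monotone_strictMono_nonneg_of_isClosed_Ici RT.isClosed_Ici_state
    exact ⟨_, ResourceTheory.isMonotone_shiftedExtension hu hu₀, fun ρ σ hρ hσ =>
      ResourceTheory.le_iff_shiftedExtension_le hu hu'
        (fun ρ σ => htotal σ.1 ρ.1 σ.2 ρ.2) ⟨ρ, hρ⟩ ⟨σ, hσ⟩⟩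

end
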